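/- For a pure bipartite state |ψ⟩ = Σ_i √λ_i |i,i⟩ with all λ_i > 0 and pairwise distinct, if {|f_k⟩_A} and {|g_l⟩_B} are local orthonormal bases in which the reduced states ρ_A and ρ_B are both diagonal, then the l1-norm of coherence of |ψ⟩⟨ψ| in the product basis {|f_k⟩⊗|g_l⟩} equals Σ_{i≠j} √(λ_i λ_j). -/

import Mathlib

/-!
Since the `λ_i` are distinct, `ρ_A = ρ_B = diag λ` has one-dimensional eigenspaces, so a basis
diagonalizing it consists of unit multiples of standard basis vectors: `f_k ∝ e_{σ k}` and
`g_l ∝ e_{τ l}` for permutations `σ, τ`. The coefficient `c_{kl} = ⟨f_k ⊗ g_l | ψ⟩` then has modulus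
`√λ_{σ k}` if `σ k = τ l` and vanishes otherwise. The entries of `|ψ⟩⟨ψ|` in the product basis are
`c_p conj c_q`, so the l1-coherence is
`∑_{p ≠ q} |c_p| |c_q| = (∑ |c_p|)² - ∑ |c_p|² = (∑ √λ_i)² - ∑ λ_i`,
and the right-hand side has the same expansion.
-/

open scoped BigOperators Matrix

def proj {ι : Type*} (v : ι → ℂ) : Matrix ι ι ℂ :=
  Matrix.vecMulVec v (star v)

def tens {ιA ιB : Type*} (a : ιA → ℂ) (b : ιB → ℂ) : ιA × ιB → ℂ :=
  fun p => a p.1 * b p.2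

noncomputable def ptrB {d : ℕ}
    (M : Matrix (Fin d × Fin d) (Fin d × Fin d) ℂ) :
    Matrix (Fin d) (Fin d) ℂ :=
  fun i j => ∑ y : Fin d, M (i, y) (j, y)

noncomputable def ptrA {d : ℕ}
    (M : Matrix (Fin d × Fin d) (Fin d × Fin d) ℂ) :
    Matrix (Fin d) (Fin d) ℂ :=
  fun i j => ∑ x : Fin d, M (x, i) (x, j)

open Matrix

lemma sum_sum_ite_ne_mul {ι R : Type*} [Fintype ι] [DecidableEq ι] [CommRing R] (x : ι → R) :
    (∑ p, ∑ q, if p ≠ q then x p * x q else 0) = (∑ p, x p) ^ 2 - ∑ p, x p ^ 2 := by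
  have h : ∀ p q, (if p ≠ q then x p * x q else 0) = x p * x q - if p = q then x p ^ 2 else 0 := by
    intro p q
    by_cases hpq : p = q <;> simp [hpq, sq]
  simp_rw [h, Finset.sum_sub_distrib, Finset.sum_ite_eq, Finset.mem_univ, if_true, sq,
    Finset.sum_mul_sum]

lemma sum_sum_ite_perm_eq {ι M : Type*} [Fintype ι] [DecidableEq ι] [AddCommMonoid M]
    (σ τ : Equiv.Perm ι) (h : ι → M) :
    (∑ k, ∑ l, if σ k = τ l then h (σ k) else 0) = ∑ i, h i := by
  have hinner : ∀ k, (∑ l, if σ k = τ l then h (σ k) else 0) = h (σ k) := by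
    intro k
    simp_rw [eq_comm (a := σ k), ← Equiv.eq_symm_apply]
    simp
  simp_rw [hinner]
  exact Equiv.sum_comp σ h

section Projector

variable {ι : Type*} [Fintype ι]

lemma proj_mulVec (v w : ι → ℂ) : proj v *ᵥ w = (star v ⬝ᵥ w) • v := by
  rw [proj, vecMulVec_mulVec, op_smul_eq_smul]

lemma norm_star_dotProduct_proj_mulVec (u v w : ι → ℂ) :
    ‖star u ⬝ᵥ proj v *ᵥ w‖ = ‖star u ⬝ᵥ v‖ * ‖star w ⬝ᵥ v‖ := by
  rw [proj_mulVec, dotProduct_smul, smul_eq_mul, norm_mul, star_dotProduct v w, norm_star,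
    mul_comm]

end Projector

noncomputable def schmidt {ι : Type*} [DecidableEq ι] (lam : ι → ℝ) : ι × ι → ℂ :=
  fun p => if p.1 = p.2 then (√(lam p.1) : ℂ) else 0

lemma ptrB_proj_schmidt {d : ℕ} {lam : Fin d → ℝ} (hlam : ∀ i, 0 ≤ lam i) :
    ptrB (proj (schmidt lam)) = diagonal fun i => (lam i : ℂ) := by
  ext i j
  by_cases hij : i = j
  · subst hij
    simp [ptrB, proj, vecMulVec_apply, schmidt, ← Complex.ofReal_mul, Real.mul_self_sqrt (hlam _)]
  · simp [ptrB, proj, vecMulVec_apply, schmidt, hij, Ne.symm hij]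

lemma ptrA_proj_schmidt {d : ℕ} {lam : Fin d → ℝ} (hlam : ∀ i, 0 ≤ lam i) :
    ptrA (proj (schmidt lam)) = diagonal fun i => (lam i : ℂ) := by
  ext i j
  by_cases hij : i = j
  · subst hij
    simp [ptrA, proj, vecMulVec_apply, schmidt, ← Complex.ofReal_mul, Real.mul_self_sqrt (hlam _)]
  · simp [ptrA, proj, vecMulVec_apply, schmidt, hij]

section Orthonormal

variable {ι : Type*} [Fintype ι] [DecidableEq ι] {f : ι → ι → ℂ}

lemma conjTranspose_mul_self_of_orthonormal
    (hf : ∀ k l, ∑ m, star (f k m) * f l m = if k = l then 1 else 0) :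
    (of f)ᵀᴴ * (of f)ᵀ = 1 := by
  ext k l
  simpa [mul_apply, one_apply] using hf k l

lemma diagonal_mulVec_eq_smul_of_orthonormal
    (hf : ∀ k l, ∑ m, star (f k m) * f l m = if k = l then 1 else 0) (μ : ι → ℂ)
    (hdiag : ∀ k l, k ≠ l → star (f k) ⬝ᵥ diagonal μ *ᵥ f l = 0) (k : ι) :
    diagonal μ *ᵥ f k = (star (f k) ⬝ᵥ diagonal μ *ᵥ f k) • f k := by
  set V : Matrix ι ι ℂ := (of f)ᵀ
  have hV : V * Vᴴ = 1 := mul_eq_one_comm.mp (conjTranspose_mul_self_of_orthonormal hf)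
  have hM : ∀ k l, (Vᴴ * diagonal μ * V) k l = star (f k) ⬝ᵥ diagonal μ *ᵥ f l := by
    intro k l
    simp [V, mul_apply, dotProduct, mulVec, diagonal_apply, mul_assoc]
  have hdiagM : Vᴴ * diagonal μ * V = diagonal fun k => star (f k) ⬝ᵥ diagonal μ *ᵥ f k := by
    ext k l
    rw [hM, diagonal_apply]
    split_ifs with hkl
    · rw [hkl]
    · exact hdiag k l hkl
  have hcomm : diagonal μ * V = V * diagonal fun k => star (f k) ⬝ᵥ diagonal μ *ᵥ f k := by
    rw [← hdiagM, ← Matrix.mul_assoc, ← Matrix.mul_assoc, hV, Matrix.one_mul]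
  ext m
  simpa [V, diagonal_mul, mul_diagonal, mulVec_diagonal, mul_comm] using
    congrFun (congrFun hcomm m) k

lemma exists_perm_norm_apply_of_orthonormal_of_offdiag
    (hf : ∀ k l, ∑ m, star (f k m) * f l m = if k = l then 1 else 0) {μ : ι → ℂ}
    (hμ : Function.Injective μ) (hdiag : ∀ k l, k ≠ l → star (f k) ⬝ᵥ diagonal μ *ᵥ f l = 0) :
    ∃ σ : Equiv.Perm ι, ∀ k m, ‖f k m‖ = if m = σ k then 1 else 0 := by
  have heig : ∀ k m, μ m * f k m = (star (f k) ⬝ᵥ diagonal μ *ᵥ f k) * f k m := fun k m => by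
    simpa [mulVec_diagonal] using congrFun (diagonal_mulVec_eq_smul_of_orthonormal hf μ hdiag k) m
  have hsupp : ∀ k m m', f k m ≠ 0 → f k m' ≠ 0 → m = m' := fun k m m' hm hm' =>
    hμ <| (mul_right_cancel₀ hm (heig k m)).trans (mul_right_cancel₀ hm' (heig k m')).symm
  have hrow : ∀ k, ∃ m, f k m ≠ 0 := by
    intro k
    by_contra! h
    simpa [h] using hf k k
  choose σ hσ using hrow
  have hzero : ∀ k m, m ≠ σ k → f k m = 0 := fun k m hm =>
    by_contra fun h => hm (hsupp k m (σ k) h (hσ k))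
  have hinner : ∀ k l, ∑ m, star (f k m) * f l m = star (f k (σ k)) * f l (σ k) := fun k l =>
    Fintype.sum_eq_single _ fun m hm => by rw [hzero k m hm, star_zero, zero_mul]
  have hinj : Function.Injective σ := by
    intro k l hkl
    by_contra hne
    have hkl' := hf k l
    rw [if_neg hne, hinner, hkl] at hkl'
    exact mul_ne_zero (star_ne_zero.mpr (hkl ▸ hσ k)) (hσ l) hkl'
  refine ⟨Equiv.ofBijective σ hinj.bijective_of_finite, fun k m => ?_⟩
  split_ifs with hm
  · have hkk := hf k k
    rw [hinner, if_pos rfl, Complex.star_def, Complex.conj_mul'] at hkk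
    rw [hm]
    exact (pow_eq_one_iff_of_nonneg (norm_nonneg _) two_ne_zero).mp (by exact_mod_cast hkk)
  · simp [hzero k m hm]

end Orthonormal

section Coefficients

variable {ι : Type*} [Fintype ι] [DecidableEq ι]

lemma star_tens_dotProduct_schmidt (a b : ι → ℂ) (lam : ι → ℝ) :
    star (tens a b) ⬝ᵥ schmidt lam = ∑ m, star (a m) * star (b m) * √(lam m) := by
  simp [dotProduct, Fintype.sum_prod_type, tens, schmidt]

lemma norm_star_tens_dotProduct_schmidt {f g : ι → ι → ℂ} {σ τ : Equiv.Perm ι}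
    (hf : ∀ k m, ‖f k m‖ = if m = σ k then 1 else 0)
    (hg : ∀ l m, ‖g l m‖ = if m = τ l then 1 else 0) (lam : ι → ℝ) (k l : ι) :
    ‖star (tens (f k) (g l)) ⬝ᵥ schmidt lam‖ = if σ k = τ l then √(lam (σ k)) else 0 := by
  have hzero : ∀ m, m ≠ σ k → f k m = 0 := fun m hm => norm_eq_zero.mp (by rw [hf, if_neg hm])
  rw [star_tens_dotProduct_schmidt, Fintype.sum_eq_single (σ k) fun m hm => by
      rw [hzero m hm, star_zero, zero_mul, zero_mul],
    norm_mul, norm_mul, norm_star, norm_star, hf, hg, if_pos rfl, Complex.norm_real,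
    Real.norm_of_nonneg (Real.sqrt_nonneg _)]
  split_ifs <;> simp

end Coefficients

theorem stmt16_general (d : ℕ) (lam : Fin d → ℝ)
    (hpos : ∀ i, 0 < lam i)
    (hdistinct : ∀ i j : Fin d, i ≠ j → lam i ≠ lam j)
    (ψ : Fin d × Fin d → ℂ)
    (hψ : ∀ p, ψ p = if p.1 = p.2 then (Real.sqrt (lam p.1) : ℂ) else 0)
    (ρ : Matrix (Fin d × Fin d) (Fin d × Fin d) ℂ)
    (hρ : ρ = proj ψ)
    (f g : Fin d → Fin d → ℂ)
    (hf : ∀ k l, ∑ m, star (f k m) * f l m = if k = l then 1 else 0)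
    (hg : ∀ k l, ∑ m, star (g k m) * g l m = if k = l then 1 else 0)
    (hfdiag : ∀ k l : Fin d, k ≠ l →
      star (f k) ⬝ᵥ (ptrB ρ).mulVec (f l) = 0)
    (hgdiag : ∀ k l : Fin d, k ≠ l →
      star (g k) ⬝ᵥ (ptrA ρ).mulVec (g l) = 0) :
    (∑ p : Fin d × Fin d, ∑ q : Fin d × Fin d,
      if p ≠ q then
        ‖star (tens (f p.1) (g p.2)) ⬝ᵥ
          ρ.mulVec (tens (f q.1) (g q.2))‖
      else 0) =
    ∑ i : Fin d, ∑ j : Fin d,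
      if i ≠ j then Real.sqrt (lam i * lam j) else 0 := by
  obtain rfl : ψ = schmidt lam := funext hψ
  subst hρ
  have hlam : ∀ i, 0 ≤ lam i := fun i => (hpos i).le
  have hμ : Function.Injective fun i => (lam i : ℂ) := fun i j hij =>
    by_contra fun hne => hdistinct i j hne (Complex.ofReal_injective hij)
  obtain ⟨σ, hσ⟩ := exists_perm_norm_apply_of_orthonormal_of_offdiag hf hμ
    (by simpa only [ptrB_proj_schmidt hlam] using hfdiag)
  obtain ⟨τ, hτ⟩ := exists_perm_norm_apply_of_orthonormal_of_offdiag hg hμ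
    (by simpa only [ptrA_proj_schmidt hlam] using hgdiag)
  set A : Fin d × Fin d → ℝ := fun p => ‖star (tens (f p.1) (g p.2)) ⬝ᵥ schmidt lam‖
  have hA : ∀ p, A p = if σ p.1 = τ p.2 then √(lam (σ p.1)) else 0 := fun p =>
    norm_star_tens_dotProduct_schmidt hσ hτ lam p.1 p.2
  calc _ = ∑ p, ∑ q, if p ≠ q then A p * A q else 0 := by
        simp_rw [norm_star_dotProduct_proj_mulVec, A]
    _ = (∑ p, A p) ^ 2 - ∑ p, A p ^ 2 := sum_sum_ite_ne_mul A
    _ = (∑ i, √(lam i)) ^ 2 - ∑ i, √(lam i) ^ 2 := by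
        simp_rw [Fintype.sum_prod_type, hA, ite_pow, zero_pow two_ne_zero]
        exact congrArg₂ (· ^ 2 - ·) (sum_sum_ite_perm_eq σ τ fun i => √(lam i))
          (sum_sum_ite_perm_eq σ τ fun i => √(lam i) ^ 2)
    _ = _ := by
        rw [← sum_sum_ite_ne_mul]
        simp_rw [Real.sqrt_mul (hlam _)]

/-- For |ψ⟩ = Σ_i √λ_i |i,i⟩ with positive pairwise distinct λ_i,
if {f_k} and {g_l} are local orthonormal bases diagonalizing ρ_A and ρ_B
respectively, then the l1-norm of coherence of |ψ⟩⟨ψ| in the product basis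
{f_k ⊗ g_l} equals Σ_{i≠j} √(λ_i λ_j). -/
theorem stmt16 (d : ℕ) (lam : Fin d → ℝ)
    (hpos : ∀ i, 0 < lam i) (hsum : ∑ i, lam i = 1)
    (hdistinct : ∀ i j : Fin d, i ≠ j → lam i ≠ lam j)
    (ψ : Fin d × Fin d → ℂ)
    (hψ : ∀ p, ψ p = if p.1 = p.2 then (Real.sqrt (lam p.1) : ℂ) else 0)
    (ρ : Matrix (Fin d × Fin d) (Fin d × Fin d) ℂ)
    (hρ : ρ = proj ψ)
    (f g : Fin d → Fin d → ℂ)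
    (hf : ∀ k l, ∑ m, star (f k m) * f l m = if k = l then 1 else 0)
    (hg : ∀ k l, ∑ m, star (g k m) * g l m = if k = l then 1 else 0)
    (hfdiag : ∀ k l : Fin d, k ≠ l →
      star (f k) ⬝ᵥ (ptrB ρ).mulVec (f l) = 0)
    (hgdiag : ∀ k l : Fin d, k ≠ l →
      star (g k) ⬝ᵥ (ptrA ρ).mulVec (g l) = 0) :
    (∑ p : Fin d × Fin d, ∑ q : Fin d × Fin d,
      if p ≠ q then
        ‖star (tens (f p.1) (g p.2)) ⬝ᵥ
          ρ.mulVec (tens (f q.1) (g q.2))‖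
      else 0) =
    ∑ i : Fin d, ∑ j : Fin d,
      if i ≠ j then Real.sqrt (lam i * lam j) else 0 :=
  stmt16_general d lam hpos hdistinct ψ hψ ρ hρ f g hf hg hfdiag hgdiag
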